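/- arXiv:1612.02171 — 8 statements merged into one kernel-verified Lean document; each statement's English description precedes it below -/
import Mathlib

section
/- If θ is a real number with cos θ and sin θ both rational and cos θ ≠ 0, then tan θ is rational, and moreover if tan θ = q/p with p, q coprime integers, then p² + q² is a perfect square. -/
open Real

theorem tan_rational_and_sum_sq_is_square_of_cos_sin_rational
    (θ : ℝ) (hcos : ∃ r : ℚ, Real.cos θ = r) (hsin : ∃ r : ℚ, Real.sin θ = r)
    (hc : Real.cos θ ≠ 0) :
    (∃ r : ℚ, Real.tan θ = r) ∧
      ∀ p q : ℤ, Int.gcd p q = 1 → Real.tan θ = (q : ℝ) / (p : ℝ) →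
        ∃ m : ℤ, p ^ 2 + q ^ 2 = m ^ 2 := by
  obtain ⟨rc, hrc⟩ := hcos
  obtain ⟨rs, hrs⟩ := hsin
  have hrc0 : (rc : ℝ) ≠ 0 := by rw [← hrc]; exact hc
  have hrc0' : rc ≠ 0 := by exact_mod_cast fun h => hrc0 (by rw [h]; norm_num)
  have htan : Real.tan θ = ((rs / rc : ℚ) : ℝ) := by
    rw [Real.tan_eq_sin_div_cos, hrs, hrc]; push_cast; ring
  refine ⟨⟨rs / rc, htan⟩, ?_⟩
  intro p q hgcd htq
  by_cases hp : p = 0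
  · subst hp
    have hq : q.natAbs = 1 := by simpa [Int.gcd] using hgcd
    have : q = 1 ∨ q = -1 := Int.natAbs_eq_iff.mp hq
    rcases this with h | h <;> subst h <;> exact ⟨1, by norm_num⟩
  · have hp' : (p : ℝ) ≠ 0 := Int.cast_ne_zero.mpr hp
    have hsc : Real.sin θ * p = q * Real.cos θ := by
      have := htq
      rw [Real.tan_eq_sin_div_cos] at this
      field_simp at this
      linarith [this]
    have hpyth := Real.sin_sq_add_cos_sq θ
    have h2 : (Real.sin θ * p) ^ 2 = ((q : ℝ) * Real.cos θ) ^ 2 := by rw [hsc]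
    have hkey : (p : ℝ) ^ 2 = (((p ^ 2 + q ^ 2 : ℤ) : ℝ)) * Real.cos θ ^ 2 := by
      push_cast
      calc (p : ℝ) ^ 2 = (p : ℝ) ^ 2 * (Real.sin θ ^ 2 + Real.cos θ ^ 2) := by
            rw [hpyth]; ring
        _ = (Real.sin θ * p) ^ 2 + (p : ℝ) ^ 2 * Real.cos θ ^ 2 := by ring
        _ = ((q : ℝ) * Real.cos θ) ^ 2 + (p : ℝ) ^ 2 * Real.cos θ ^ 2 := by rw [h2]
        _ = ((p : ℝ) ^ 2 + (q : ℝ) ^ 2) * Real.cos θ ^ 2 := by ring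
    set x : ℝ := (p : ℝ) / Real.cos θ with hxdef
    have hxq : x = (((p : ℚ) / rc : ℚ) : ℝ) := by
      rw [hxdef, hrc]; push_cast; ring
    have hx2 : x ^ 2 = ((p ^ 2 + q ^ 2 : ℤ) : ℝ) := by
      rw [hxdef]
      push_cast at hkey ⊢
      field_simp
      linarith [hkey]
    have hnotirr : ¬ Irrational x := by
      rw [hxq]; exact Rat.not_irrational _
    have hexy : ∃ y : ℤ, x = y := by
      by_contra hne
      exact hnotirr (irrational_nrt_of_notint_nrt 2 (p ^ 2 + q ^ 2) hx2 hne (by norm_num))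
    obtain ⟨y, hy⟩ := hexy
    refine ⟨y, ?_⟩
    have : ((y : ℝ)) ^ 2 = ((p ^ 2 + q ^ 2 : ℤ) : ℝ) := by rw [← hy]; exact hx2
    exact_mod_cast this.symm
end

section
/- If tan θ = q/p with p, q coprime integers such that p² + q² is a perfect square, then cos θ and sin θ are both rational. -/
open Real

theorem cos_sin_rational_of_tan_eq_ratio_with_sum_sq_square
    (θ : ℝ) (hc : Real.cos θ ≠ 0) (p q : ℤ) (hpq : Int.gcd p q = 1)
    (htan : Real.tan θ = (q : ℝ) / (p : ℝ))
    (hsq : ∃ m : ℤ, p ^ 2 + q ^ 2 = m ^ 2) :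
    (∃ r : ℚ, Real.cos θ = r) ∧ (∃ r : ℚ, Real.sin θ = r) := by
  obtain ⟨m, hm⟩ := hsq
  have hmr : (p : ℝ) ^ 2 + (q : ℝ) ^ 2 = (m : ℝ) ^ 2 := by exact_mod_cast hm
  have hsc := Real.sin_sq_add_cos_sq θ
  have hsin : Real.sin θ = Real.tan θ * Real.cos θ := by
    rw [Real.tan_eq_sin_div_cos]; field_simp
  by_cases hp : (p : ℝ) = 0
  · have ht0 : Real.tan θ = 0 := by rw [htan, hp, div_zero]
    have hs0 : Real.sin θ = 0 := by rw [hsin, ht0, zero_mul]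
    have h : (Real.cos θ - 1) * (Real.cos θ + 1) = 0 := by nlinarith
    rcases mul_eq_zero.mp h with h | h
    · exact ⟨⟨1, by push_cast; linarith⟩, ⟨0, by push_cast; linarith⟩⟩
    · exact ⟨⟨-1, by push_cast; linarith⟩, ⟨0, by push_cast; linarith⟩⟩
  · have h1 : Real.sin θ * p = q * Real.cos θ := by
      have := hsin
      rw [htan] at this
      field_simp at this
      linarith [this]
    have hm0 : (m : ℝ) ≠ 0 := by
      intro h0
      have : (p : ℝ) ^ 2 + (q : ℝ) ^ 2 = 0 := by rw [hmr, h0]; ring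
      have hp2 : (p : ℝ) ^ 2 = 0 := by nlinarith [sq_nonneg (q : ℝ), sq_nonneg (p : ℝ)]
      exact hp (by nlinarith [sq_nonneg (p : ℝ)])
    have key : Real.cos θ ^ 2 * ((p : ℝ) ^ 2 + (q : ℝ) ^ 2) = (p : ℝ) ^ 2 := by
      linear_combination (p : ℝ) ^ 2 * hsc - (Real.sin θ * p + q * Real.cos θ) * h1
    have hc2 : Real.cos θ ^ 2 = ((p : ℝ) / (m : ℝ)) ^ 2 := by
      rw [div_pow]
      rw [eq_div_iff (by positivity)]
      rw [← hmr]; linarith [key]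
    rcases sq_eq_sq_iff_eq_or_eq_neg.mp hc2 with h | h
    · refine ⟨⟨(p : ℚ) / (m : ℚ), by push_cast; exact h⟩,
        ⟨(q : ℚ) / (p : ℚ) * ((p : ℚ) / (m : ℚ)), ?_⟩⟩
      rw [hsin, htan, h]; push_cast; ring
    · refine ⟨⟨-((p : ℚ) / (m : ℚ)), by push_cast; exact h⟩,
        ⟨(q : ℚ) / (p : ℚ) * (-((p : ℚ) / (m : ℚ))), ?_⟩⟩
      rw [hsin, htan, h]; push_cast; ring
end

section
/- If tan θ = q/p for coprime integers p, q, then tan(2θ) = 2pq/(p² − q²) (when cos(2θ) ≠ 0), and writing tan(2θ) = u/v in lowest terms, u² + v² is a perfect square. -/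
open Real

theorem tan_two_mul_formula_and_sum_sq_square
    (θ : ℝ) (p q : ℤ) (hpq : Int.gcd p q = 1)
    (htan : Real.tan θ = (q : ℝ) / (p : ℝ))
    (hne : p ^ 2 - q ^ 2 ≠ 0)
    (hcos2 : Real.cos (2 * θ) ≠ 0) :
    Real.tan (2 * θ) = (2 * p * q : ℝ) / ((p ^ 2 - q ^ 2 : ℤ) : ℝ) ∧
      ∀ u v : ℤ, Int.gcd u v = 1 → Real.tan (2 * θ) = (u : ℝ) / (v : ℝ) →
        ∃ m : ℤ, u ^ 2 + v ^ 2 = m ^ 2 := by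
  have hbR : ((p ^ 2 - q ^ 2 : ℤ) : ℝ) ≠ 0 := by exact_mod_cast hne
  have h1 : Real.tan (2 * θ) = (2 * p * q : ℝ) / ((p ^ 2 - q ^ 2 : ℤ) : ℝ) := by
    rw [Real.tan_two_mul, htan]
    by_cases hp : (p : ℝ) = 0
    · simp [hp]
    · push_cast at hbR ⊢
      field_simp
  refine ⟨h1, ?_⟩
  intro u v huv htuv
  have hreal : (u : ℝ) / (v : ℝ)
      = ((2 * p * q : ℤ) : ℝ) / ((p ^ 2 - q ^ 2 : ℤ) : ℝ) := by
    rw [← htuv, h1]; push_cast; ring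
  by_cases hv : v = 0
  · have hu : u = 1 ∨ u = -1 := by
      have : u.natAbs = 1 := by simpa [hv] using huv
      rcases Int.natAbs_eq u with h | h <;> omega
    refine ⟨1, ?_⟩
    rcases hu with h | h <;> simp [h, hv]
  · have hvR : (v : ℝ) ≠ 0 := by exact_mod_cast hv
    have hcross : u * (p ^ 2 - q ^ 2) = 2 * p * q * v := by
      have := (div_eq_div_iff hvR hbR).mp hreal
      exact_mod_cast this
    have hcop : IsCoprime u v := Int.isCoprime_iff_gcd_eq_one.mpr huv
    have hvb : v ∣ p ^ 2 - q ^ 2 := by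
      have : v ∣ u * (p ^ 2 - q ^ 2) := ⟨2 * p * q, by linarith [hcross]⟩
      exact hcop.symm.dvd_of_dvd_mul_left this
    obtain ⟨k, hk⟩ := hvb
    have hak : 2 * p * q = u * k := by
      have h2 : v * (u * k) = v * (2 * p * q) := by
        have : u * (v * k) = 2 * p * q * v := by rw [← hk]; exact hcross
        linarith [this]
      exact (mul_left_cancel₀ hv h2).symm
    have hk0 : k ≠ 0 := by
      intro h; rw [h, mul_zero] at hk; exact hne hk
    have hsum : k ^ 2 * (u ^ 2 + v ^ 2) = (p ^ 2 + q ^ 2) ^ 2 := by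
      have h3 : (2 * p * q) ^ 2 + (p ^ 2 - q ^ 2) ^ 2 = (p ^ 2 + q ^ 2) ^ 2 := by
        ring
      rw [← h3, hak, hk]; ring
    have hdvd : k ∣ p ^ 2 + q ^ 2 := by
      rw [← Int.pow_dvd_pow_iff (two_ne_zero)]
      exact ⟨u ^ 2 + v ^ 2, hsum.symm⟩
    obtain ⟨m, hm⟩ := hdvd
    refine ⟨m, ?_⟩
    have hk2 : k ^ 2 ≠ 0 := pow_ne_zero _ hk0
    have h4 : k ^ 2 * (u ^ 2 + v ^ 2) = k ^ 2 * m ^ 2 := by rw [hsum, hm]; ring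
    exact mul_left_cancel₀ hk2 h4
end

section
/- The set C_Q = {θ ∈ ℝ : cos θ ∈ ℚ and sin θ ∈ ℚ} is a dense additive subgroup of ℝ. -/
open Real

/-- The set of real θ with both cos θ and sin θ rational. -/
def CQ : Set ℝ :=
  {θ : ℝ | (∃ r : ℚ, Real.cos θ = r) ∧ ∃ r : ℚ, Real.sin θ = r}

/-- CQ as an additive subgroup. -/
def CQgroup : AddSubgroup ℝ where
  carrier := CQ
  zero_mem' := ⟨⟨1, by simp⟩, ⟨0, by simp⟩⟩
  add_mem' := by
    rintro x y ⟨⟨a, ha⟩, ⟨b, hb⟩⟩ ⟨⟨c, hc⟩, ⟨d, hd⟩⟩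
    exact ⟨⟨a * c - b * d, by rw [Real.cos_add, ha, hb, hc, hd]; push_cast; ring⟩,
           ⟨b * c + a * d, by rw [Real.sin_add, ha, hb, hc, hd]; push_cast; ring⟩⟩
  neg_mem' := by
    rintro x ⟨⟨a, ha⟩, ⟨b, hb⟩⟩
    exact ⟨⟨a, by rw [Real.cos_neg, ha]⟩, ⟨-b, by rw [Real.sin_neg, hb]; push_cast; ring⟩⟩

lemma theta_mem (n : ℕ) (hn : 1 ≤ n) :
    Real.arcsin (2 * n / (n ^ 2 + 1)) ∈ CQgroup := by
  have hpos : (0:ℝ) < (n:ℝ) ^ 2 + 1 := by positivity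
  have hnn : (0:ℝ) ≤ 2 * n / (n ^ 2 + 1) := by positivity
  have hle1 : 2 * (n:ℝ) / ((n:ℝ) ^ 2 + 1) ≤ 1 := by
    rw [div_le_one hpos]
    nlinarith [sq_nonneg ((n:ℝ) - 1)]
  constructor
  · refine ⟨((n^2 - 1) / (n^2 + 1) : ℚ), ?_⟩
    rw [Real.cos_arcsin]
    have h1 : (1:ℝ) - (2 * n / (n ^ 2 + 1)) ^ 2 = (((n:ℝ)^2 - 1) / ((n:ℝ)^2 + 1)) ^ 2 := by
      field_simp; ring
    rw [h1, Real.sqrt_sq]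
    · push_cast
      ring
    · have hn' : (1:ℝ) ≤ (n:ℝ) := by exact_mod_cast hn
      exact div_nonneg (by nlinarith) (by positivity)
  · refine ⟨(2 * n / (n^2 + 1) : ℚ), ?_⟩
    rw [Real.sin_arcsin (by linarith) hle1]
    push_cast
    ring

lemma small_elem : ∀ ε > 0, ∃ g ∈ CQgroup, g ∈ Set.Ioo (0:ℝ) ε := by
  intro ε hε
  have h0 : Filter.Tendsto (fun n : ℕ => 2 * (n:ℝ) / ((n:ℝ) ^ 2 + 1)) Filter.atTop (nhds 0) := by
    apply squeeze_zero' (g := fun n : ℕ => 2 / (n:ℝ))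
    · filter_upwards with n; positivity
    · filter_upwards [Filter.eventually_ge_atTop 1] with n hn
      have hn' : (1:ℝ) ≤ (n:ℝ) := by exact_mod_cast hn
      rw [div_le_div_iff₀ (by positivity) (by linarith)]
      nlinarith
    · exact tendsto_const_div_atTop_nhds_zero_nat 2
  have htend : Filter.Tendsto (fun n : ℕ => Real.arcsin (2 * n / ((n:ℝ) ^ 2 + 1)))
      Filter.atTop (nhds 0) := by
    have := (Real.continuous_arcsin.tendsto 0).comp h0
    simpa [Function.comp_def] using this
  have hev := (htend.eventually (gt_mem_nhds hε)).and (Filter.eventually_ge_atTop 1)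
  obtain ⟨n, hlt, hn1⟩ := hev.exists
  refine ⟨_, theta_mem n hn1, ?_, hlt⟩
  apply Real.arcsin_pos.2
  have hn' : (1:ℝ) ≤ (n:ℝ) := by exact_mod_cast hn1
  positivity

theorem CQ_dense_addSubgroup :
    (∃ G : AddSubgroup ℝ, (G : Set ℝ) = CQ) ∧ Dense CQ := by
  refine ⟨⟨CQgroup, rfl⟩, ?_⟩
  exact CQgroup.dense_of_not_isolated_zero small_elem
end

section
/- The set X = {((a²−b²)/(a²+b²), 2ab/(a²+b²)) : a, b ∈ ℤ, a²+b² a nonzero perfect square} is dense in the unit circle S¹ ⊂ ℝ². -/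
/-- The set of points on the unit circle arising from pairs of integers `a, b` with
`a² + b²` a nonzero perfect square. -/
def pythTripleSet : Set (EuclideanSpace ℝ (Fin 2)) :=
  {P | ∃ a b : ℤ, (∃ m : ℤ, a ^ 2 + b ^ 2 = m ^ 2) ∧ a ^ 2 + b ^ 2 ≠ 0 ∧
    P = ![((a : ℝ) ^ 2 - b ^ 2) / (a ^ 2 + b ^ 2), 2 * a * b / (a ^ 2 + b ^ 2)]}

noncomputable def pythG (q : ℝ) : EuclideanSpace ℝ (Fin 2) :=
  WithLp.toLp 2 ![((1 - q ^ 2) ^ 2 - 4 * q ^ 2) / (1 + q ^ 2) ^ 2,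
    4 * q * (1 - q ^ 2) / (1 + q ^ 2) ^ 2]

lemma pythG_continuous : Continuous pythG := by
  refine (PiLp.continuous_toLp (p := 2) (β := fun _ : Fin 2 => ℝ)).comp ?_
  apply continuous_pi
  intro i
  fin_cases i <;>
    · simp only [pythG, Matrix.cons_val_zero, Matrix.cons_val_one, Matrix.head_cons]
      exact Continuous.div (by fun_prop) (by fun_prop) (fun q => by positivity)

lemma pythG_mem (q : ℚ) : pythG (q : ℝ) ∈ pythTripleSet := by
  refine ⟨(q.den : ℤ) ^ 2 - q.num ^ 2, 2 * q.den * q.num, ⟨(q.den : ℤ) ^ 2 + q.num ^ 2, by ring⟩,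
    ?_, ?_⟩
  · have hd : (0:ℤ) < (q.den : ℤ) := by exact_mod_cast q.pos
    intro h
    have key : ((q.den : ℤ) ^ 2 - q.num ^ 2) ^ 2 + (2 * q.den * q.num) ^ 2 =
        ((q.den : ℤ) ^ 2 + q.num ^ 2) ^ 2 := by ring
    have h2 : ((q.den:ℤ) ^ 2 + q.num ^ 2) ^ 2 = 0 := by linarith
    have h3 : (q.den:ℤ) ^ 2 + q.num ^ 2 = 0 := by
      exact pow_eq_zero_iff (by norm_num) |>.mp h2
    nlinarith [sq_nonneg q.num, mul_pos hd hd, h3]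
  · have hd : ((q.den : ℝ)) ≠ 0 := by
      exact_mod_cast Nat.cast_ne_zero.mpr q.den_nz
    have hq : (q : ℝ) = (q.num : ℝ) / (q.den : ℝ) := by
      rw [Rat.cast_def]
    have hden : ((q.den:ℝ)^2 + (q.num:ℝ)^2) ≠ 0 := by positivity
    funext i
    fin_cases i <;>
      · simp only [pythG, WithLp.ofLp_toLp, Matrix.cons_val_zero, Matrix.cons_val_one, Matrix.head_cons, hq]
        push_cast
        have hN : (q.num : ℝ) = q * q.den := by rw [hq]; field_simp
        rw [hN]
        have hbig : ((q.den:ℝ) ^ 2 - ((q:ℝ) * q.den) ^ 2) ^ 2 +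
            (2 * (q.den:ℝ) * ((q:ℝ) * q.den)) ^ 2 ≠ 0 := by
          have he : ((q.den:ℝ) ^ 2 - ((q:ℝ) * q.den) ^ 2) ^ 2 +
              (2 * (q.den:ℝ) * ((q:ℝ) * q.den)) ^ 2 =
              (q.den:ℝ) ^ 4 * (1 + (q:ℝ) ^ 2) ^ 2 := by ring
          rw [he]
          exact mul_ne_zero (pow_ne_zero _ hd) (by positivity)
        rw [show (q:ℝ) * q.den / q.den = q from by field_simp,
          div_eq_div_iff (by positivity) hbig]
        ring

lemma pythG_tan (x : ℝ) (hc : Real.cos x ≠ 0) :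
    pythG (Real.tan x) = ![Real.cos (4 * x), Real.sin (4 * x)] := by
  have hsc : Real.sin x ^ 2 + Real.cos x ^ 2 = 1 := Real.sin_sq_add_cos_sq x
  have ht : Real.tan x = Real.sin x / Real.cos x := Real.tan_eq_sin_div_cos x
  have hcos4 : Real.cos (4 * x) = 1 - 8 * Real.sin x ^ 2 * Real.cos x ^ 2 := by
    have h1 : (4:ℝ) * x = 2 * (2 * x) := by ring
    rw [h1, Real.cos_two_mul, Real.cos_two_mul]
    linear_combination (8 * Real.cos x ^ 2) * hsc
  have hsin4 : Real.sin (4 * x) = 4 * Real.sin x * Real.cos x * (Real.cos x ^ 2 - Real.sin x ^ 2) := by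
    have h1 : (4:ℝ) * x = 2 * (2 * x) := by ring
    rw [h1, Real.sin_two_mul, Real.sin_two_mul, Real.cos_two_mul]
    linear_combination (4 * Real.sin x * Real.cos x) * hsc
  funext i
  fin_cases i
  · simp only [pythG, WithLp.ofLp_toLp, Fin.zero_eta, Fin.mk_one, Matrix.cons_val_zero, Matrix.cons_val_one, Matrix.head_cons,
      ht, hcos4, hsin4]
    field_simp
    linear_combination (8 * Real.cos x ^ 2 * Real.sin x ^ 4 + (8 * Real.cos x ^ 2 + 8 * Real.cos x ^ 4) * Real.sin x ^ 2) * hsc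
  · simp only [pythG, WithLp.ofLp_toLp, Fin.zero_eta, Fin.mk_one, Matrix.cons_val_zero, Matrix.cons_val_one, Matrix.head_cons,
      ht, hcos4, hsin4]
    field_simp
    linear_combination (-(Real.sin x * (Real.cos x ^ 2 - Real.sin x ^ 2) * (Real.sin x ^ 2 + Real.cos x ^ 2 + 1))) * hsc

lemma pythTripleSet_subset_sphere :
    pythTripleSet ⊆ Metric.sphere (0 : EuclideanSpace ℝ (Fin 2)) 1 := by
  rintro P ⟨a, b, _, hne, hP⟩
  have hs : ((a:ℝ) ^ 2 + (b:ℝ) ^ 2) ≠ 0 := by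
    intro h
    apply hne
    have := sq_nonneg (a:ℝ)
    have := sq_nonneg (b:ℝ)
    have ha : (a:ℝ) = 0 := by nlinarith
    have hb : (b:ℝ) = 0 := by nlinarith
    have ha' : a = 0 := by exact_mod_cast ha
    have hb' : b = 0 := by exact_mod_cast hb
    simp [ha', hb']
  rw [mem_sphere_zero_iff_norm, EuclideanSpace.norm_eq]
  rw [show (1:ℝ) = Real.sqrt 1 by simp]
  congr 1
  rw [Fin.sum_univ_two]
  simp only [hP, Matrix.cons_val_zero, Matrix.cons_val_one, Matrix.head_cons, Real.norm_eq_abs,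
    sq_abs]
  field_simp
  ring

theorem pythTripleSet_dense_in_circle :
    closure pythTripleSet = Metric.sphere (0 : EuclideanSpace ℝ (Fin 2)) 1 := by
  apply Set.Subset.antisymm
  · rw [show Metric.sphere (0 : EuclideanSpace ℝ (Fin 2)) 1 =
        closure (Metric.sphere (0 : EuclideanSpace ℝ (Fin 2)) 1) from
      (Metric.isClosed_sphere.closure_eq).symm]
    exact closure_mono pythTripleSet_subset_sphere
  · intro P hP
    -- P = (cos θ, sin θ) for θ = arg of the corresponding complex number
    have hnorm : ‖P‖ = 1 := mem_sphere_zero_iff_norm.mp hP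
    have hsum : P 0 ^ 2 + P 1 ^ 2 = 1 := by
      have := congrArg (fun r : ℝ => r ^ 2) hnorm
      rw [EuclideanSpace.norm_eq] at this
      simp only [one_pow] at this
      rw [Real.sq_sqrt (by positivity)] at this
      rw [Fin.sum_univ_two] at this
      simpa [sq_abs] using this
    set z : ℂ := ⟨P 0, P 1⟩ with hz
    have hzabs : ‖z‖ = 1 := by
      rw [Complex.norm_def, Complex.normSq_mk]
      rw [show P 0 * P 0 + P 1 * P 1 = 1 by nlinarith [hsum]]
      simp
    have hz0 : z ≠ 0 := by
      intro h
      rw [h] at hzabs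
      simp at hzabs
    set θ := Complex.arg z with hθ
    have hcos : Real.cos θ = P 0 := by
      rw [hθ, Complex.cos_arg hz0, hzabs]
      simp [hz]
    have hsin : Real.sin θ = P 1 := by
      rw [hθ, Complex.sin_arg, hzabs]
      simp [hz]
    have hmem : θ ∈ Set.Ioc (-Real.pi) Real.pi := Complex.arg_mem_Ioc z
    have hpi : (0:ℝ) < Real.pi := Real.pi_pos
    have hcosq : Real.cos (θ / 4) ≠ 0 := by
      have : Real.cos (θ / 4) > 0 := by
        apply Real.cos_pos_of_mem_Ioo
        constructor <;> [nlinarith [hmem.1]; nlinarith [hmem.2]]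
      linarith
    have hP4 : pythG (Real.tan (θ / 4)) = P := by
      apply WithLp.ofLp_injective 2
      rw [pythG_tan _ hcosq]
      have h4 : 4 * (θ / 4) = θ := by ring
      rw [h4]
      funext i
      fin_cases i <;> simp [hcos, hsin]
    have hdense : Real.tan (θ / 4) ∈ closure (Set.range ((↑) : ℚ → ℝ)) := by
      rw [Rat.denseRange_cast.closure_range]
      trivial
    have : P ∈ pythG '' closure (Set.range ((↑) : ℚ → ℝ)) :=
      ⟨_, hdense, hP4⟩
    have hsub : pythG '' closure (Set.range ((↑) : ℚ → ℝ)) ⊆ closure pythTripleSet := by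
      refine (image_closure_subset_closure_image pythG_continuous).trans (closure_mono ?_)
      rintro _ ⟨_, ⟨q, rfl⟩, rfl⟩
      exact pythG_mem q
    exact hsub this
end

section
/- The set X = {((a²−b²)/(a²+b²), 2ab/(a²+b²)) : a, b ∈ ℤ, a²+b² a nonzero perfect square} is a rational set: the euclidean distance between any two of its points is rational. -/
theorem pythTripleSet_rational_distances :
    ∀ P ∈ pythTripleSet, ∀ Q ∈ pythTripleSet, ∃ r : ℚ, dist P Q = r := by
  rintro P ⟨a₁, b₁, ⟨m₁, hm₁⟩, hs₁, hP⟩ Q ⟨a₂, b₂, ⟨m₂, hm₂⟩, hs₂, hQ⟩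
  refine ⟨|2 * ((a₁:ℚ) * b₂ - a₂ * b₁) / (m₁ * m₂)|, ?_⟩
  have hm₁z : m₁ ≠ 0 := by intro h; apply hs₁; rw [hm₁, h]; ring
  have hm₂z : m₂ ≠ 0 := by intro h; apply hs₂; rw [hm₂, h]; ring
  have hm₁0 : (m₁ : ℝ) ≠ 0 := Int.cast_ne_zero.mpr hm₁z
  have hm₂0 : (m₂ : ℝ) ≠ 0 := Int.cast_ne_zero.mpr hm₂z
  have hs₁' : ((a₁:ℝ) ^ 2 + b₁ ^ 2) = (m₁:ℝ) ^ 2 := by exact_mod_cast hm₁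
  have hs₂' : ((a₂:ℝ) ^ 2 + b₂ ^ 2) = (m₂:ℝ) ^ 2 := by exact_mod_cast hm₂
  have hd1 : ((a₁:ℝ) ^ 2 + b₁ ^ 2) ≠ 0 := by rw [hs₁']; positivity
  have hd2 : ((a₂:ℝ) ^ 2 + b₂ ^ 2) ≠ 0 := by rw [hs₂']; positivity
  rw [EuclideanSpace.dist_eq]
  rw [Fin.sum_univ_two]
  rw [hP, hQ]
  simp only [Matrix.cons_val_zero, Matrix.cons_val_one, Matrix.head_cons]
  have key : (((a₁:ℝ) ^ 2 - b₁ ^ 2) / (a₁ ^ 2 + b₁ ^ 2) -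
        ((a₂:ℝ) ^ 2 - b₂ ^ 2) / (a₂ ^ 2 + b₂ ^ 2)) ^ 2 +
      (2 * a₁ * b₁ / (a₁ ^ 2 + b₁ ^ 2) - 2 * a₂ * b₂ / (a₂ ^ 2 + b₂ ^ 2)) ^ 2 =
      (2 * ((a₁:ℝ) * b₂ - a₂ * b₁)) ^ 2 / (((a₁:ℝ) ^ 2 + b₁ ^ 2) * ((a₂:ℝ) ^ 2 + b₂ ^ 2)) := by
    field_simp
    ring
  simp only [Real.dist_eq, sq_abs]
  rw [key, hs₁', hs₂', show (m₁:ℝ) ^ 2 * (m₂:ℝ) ^ 2 = ((m₁:ℝ) * m₂) ^ 2 by ring,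
    ← div_pow, Real.sqrt_sq_eq_abs]
  push_cast
  ring_nf
end

section
/- Every circle in the euclidean plane with rational radius contains a dense subset all of whose pairwise euclidean distances are rational. -/
open Real

noncomputable def pt (c : EuclideanSpace ℝ (Fin 2)) (r θ : ℝ) : EuclideanSpace ℝ (Fin 2) :=
  (WithLp.equiv 2 (Fin 2 → ℝ)).symm ![c 0 + r * Real.cos θ, c 1 + r * Real.sin θ]

lemma continuous_pt (c : EuclideanSpace ℝ (Fin 2)) (r : ℝ) : Continuous (fun θ => pt c r θ) := by
  unfold pt
  apply Continuous.comp (PiLp.continuous_toLp 2 (fun _ : Fin 2 => ℝ))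
  apply continuous_pi
  intro i
  fin_cases i <;> simp <;> fun_prop

lemma dist_pt (c : EuclideanSpace ℝ (Fin 2)) {r : ℝ} (hr : 0 ≤ r) (α β : ℝ) :
    dist (pt c r α) (pt c r β) = 2 * r * |Real.sin ((α - β) / 2)| := by
  rw [EuclideanSpace.dist_eq, Fin.sum_univ_two]
  simp only [Real.dist_eq, sq_abs]
  show Real.sqrt ((c 0 + r * cos α - (c 0 + r * cos β))^2 + (c 1 + r * sin α - (c 1 + r * sin β))^2) = _
  have hs : cos (α - β) = 1 - 2 * sin ((α - β)/2)^2 := by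
    have h2 := Real.cos_two_mul ((α - β)/2)
    have h3 := Real.sin_sq_add_cos_sq ((α - β)/2)
    have h4 : 2 * ((α - β)/2) = α - β := by ring
    rw [h4] at h2; linarith
  have h1 : (c 0 + r * cos α - (c 0 + r * cos β))^2 + (c 1 + r * sin α - (c 1 + r * sin β))^2
      = (2 * r * |Real.sin ((α - β) / 2)|)^2 := by
    have hc : cos α * cos β + sin α * sin β = cos (α - β) := (Real.cos_sub α β).symm
    have hA := Real.sin_sq_add_cos_sq α
    have hB := Real.sin_sq_add_cos_sq β
    rw [mul_pow, sq_abs]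
    linear_combination r^2*hA + r^2*hB - 2*r^2*hc - 2*r^2*hs
  rw [h1, Real.sqrt_sq (by positivity)]

lemma pt_mem_sphere (c : EuclideanSpace ℝ (Fin 2)) {r : ℝ} (hr : 0 ≤ r) (θ : ℝ) :
    pt c r θ ∈ Metric.sphere c r := by
  rw [Metric.mem_sphere, EuclideanSpace.dist_eq, Fin.sum_univ_two]
  simp only [Real.dist_eq, sq_abs]
  show Real.sqrt ((c 0 + r * cos θ - c 0)^2 + (c 1 + r * sin θ - c 1)^2) = r
  have h : (c 0 + r * cos θ - c 0)^2 + (c 1 + r * sin θ - c 1)^2 = r^2 := by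
    have := Real.sin_sq_add_cos_sq θ; nlinarith
  rw [h, Real.sqrt_sq hr]

lemma sin_two_arctan (x : ℝ) : Real.sin (2 * Real.arctan x) = 2*x/(1+x^2) := by
  have h : Real.sqrt (1+x^2) * Real.sqrt (1+x^2) = 1 + x^2 :=
    Real.mul_self_sqrt (by positivity)
  rw [Real.sin_two_mul, Real.sin_arctan, Real.cos_arctan, ← h]
  have hs : Real.sqrt (1+x^2) ≠ 0 := by positivity
  field_simp
  rw [Real.sqrt_sq (Real.sqrt_nonneg _)]

lemma cos_two_arctan (x : ℝ) : Real.cos (2 * Real.arctan x) = (1-x^2)/(1+x^2) := by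
  have h : Real.sqrt (1+x^2) * Real.sqrt (1+x^2) = 1 + x^2 :=
    Real.mul_self_sqrt (by positivity)
  have h0 : (0:ℝ) < 1 + x^2 := by positivity
  rw [Real.cos_two_mul, Real.cos_arctan]
  field_simp
  nlinarith [h]

theorem circle_rational_radius_has_dense_rational_set
    (c : EuclideanSpace ℝ (Fin 2)) (r : ℚ) (hr : 0 < r) :
    ∃ Y : Set (EuclideanSpace ℝ (Fin 2)),
      Y ⊆ Metric.sphere c (r : ℝ) ∧
      closure Y = Metric.sphere c (r : ℝ) ∧
      ∀ P ∈ Y, ∀ Q ∈ Y, ∃ s : ℚ, dist P Q = s := by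
  have hr' : (0:ℝ) < (r:ℝ) := by exact_mod_cast hr
  refine ⟨{p | ∃ t : ℚ, p = pt c (r:ℝ) (4 * Real.arctan t)}, ?_, ?_, ?_⟩
  · rintro p ⟨t, rfl⟩
    exact pt_mem_sphere c hr'.le _
  · apply subset_antisymm
    · exact Metric.isClosed_sphere.closure_subset_iff.mpr (by rintro p ⟨t, rfl⟩; exact pt_mem_sphere c hr'.le _)
    · intro p hp
      rw [Metric.mem_sphere] at hp
      set z : ℂ := ⟨p 0 - c 0, p 1 - c 1⟩ with hz
      have habs : ‖z‖ = r := by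
        rw [EuclideanSpace.dist_eq, Fin.sum_univ_two] at hp
        simp only [Real.dist_eq, sq_abs] at hp
        rw [Complex.norm_def, Complex.normSq_apply]
        convert hp using 3 <;> ring
      have hz0 : z ≠ 0 := by
        intro h; rw [h, norm_zero] at habs; exact hr'.ne habs
      set θ := Complex.arg z with hθ
      have hcos : Real.cos θ = z.re / (r:ℝ) := by rw [← habs]; exact Complex.cos_arg hz0
      have hsin : Real.sin θ = z.im / (r:ℝ) := by rw [← habs]; exact Complex.sin_arg z
      have hpθ : p = pt c (r:ℝ) θ := by
        apply PiLp.ext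
        intro i
        fin_cases i
        · show p 0 = c 0 + (r:ℝ) * Real.cos θ
          rw [hcos]; field_simp [hr'.ne']; rw [hz]; dsimp only; ring
        · show p 1 = c 1 + (r:ℝ) * Real.sin θ
          rw [hsin]; field_simp [hr'.ne']; rw [hz]; dsimp only; ring
      have hθ1 : -π < θ := Complex.neg_pi_lt_arg z
      have hθ2 : θ ≤ π := Complex.arg_le_pi z
      have hpi := Real.pi_pos
      have harct : Real.arctan (Real.tan (θ/4)) = θ/4 :=
        Real.arctan_tan (by linarith) (by linarith)
      set x := Real.tan (θ/4) with hx
      -- x is a limit of rationals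
      have hxcl : x ∈ closure (Set.range ((↑) : ℚ → ℝ)) := by
        rw [Rat.denseRange_cast.closure_range]; trivial
      obtain ⟨u, hu, hulim⟩ := mem_closure_iff_seq_limit.mp hxcl
      choose q hq using hu
      have hqlim : Filter.Tendsto (fun n => ((q n : ℚ) : ℝ)) Filter.atTop (nhds x) := by
        convert hulim using 2; exact hq _
      have hcont : Filter.Tendsto (fun n => pt c (r:ℝ) (4 * Real.arctan (q n))) Filter.atTop
          (nhds (pt c (r:ℝ) (4 * Real.arctan x))) := by
        have hc2 : Continuous (fun y : ℝ => pt c (r:ℝ) (4 * Real.arctan y)) :=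
          (continuous_pt c (r:ℝ)).comp (continuous_const.mul Real.continuous_arctan)
        exact (hc2.tendsto x).comp hqlim
      have hlim : Filter.Tendsto (fun n => pt c (r:ℝ) (4 * Real.arctan (q n))) Filter.atTop (nhds p) := by
        rwa [hx, harct, show 4 * (θ/4) = θ by ring, ← hpθ] at hcont
      exact mem_closure_of_tendsto hlim (Filter.Eventually.of_forall (fun n => ⟨q n, rfl⟩))
  · rintro P ⟨t, rfl⟩ Q ⟨u, rfl⟩
    refine ⟨2 * r * |(2*t*(1-u^2) - (1-t^2)*(2*u))/((1+t^2)*(1+u^2))|, ?_⟩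
    rw [dist_pt c hr'.le]
    have h2 : (4 * Real.arctan t - 4 * Real.arctan u) / 2
        = 2 * Real.arctan t - 2 * Real.arctan u := by ring
    rw [h2, Real.sin_sub, sin_two_arctan, cos_two_arctan, sin_two_arctan, cos_two_arctan]
    have ht : (0:ℝ) < 1 + (t:ℝ)^2 := by positivity
    have hu : (0:ℝ) < 1 + (u:ℝ)^2 := by positivity
    have key : 2*(t:ℝ)/(1+(t:ℝ)^2) * ((1-(u:ℝ)^2)/(1+(u:ℝ)^2))
        - (1-(t:ℝ)^2)/(1+(t:ℝ)^2) * (2*(u:ℝ)/(1+(u:ℝ)^2))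
        = (2*(t:ℝ)*(1-(u:ℝ)^2) - (1-(t:ℝ)^2)*(2*(u:ℝ)))/((1+(t:ℝ)^2)*(1+(u:ℝ)^2)) := by
      field_simp
    rw [key]
    push_cast
    ring
end

section
/- Let E = {(x,y) ∈ ℝ² : a x² + b y² = 1} with a, b positive rationals, and suppose (x₀, y₀) = (cos θ₀/√a, sin θ₀/√b) ∈ E has rational coordinates, where θ₀ is not a rational multiple of 2π. Then the rational points of E are dense in E. -/
open Real

theorem ellipse_rational_points_dense (a b : ℚ) (ha : 0 < a) (hb : 0 < b)
    (θ₀ : ℝ) (hθ₀ : ¬∃ r : ℚ, θ₀ = 2 * Real.pi * r)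
    (x₀ y₀ : ℚ)
    (hx₀ : (x₀ : ℝ) = Real.cos θ₀ / Real.sqrt a)
    (hy₀ : (y₀ : ℝ) = Real.sin θ₀ / Real.sqrt b) :
    {p : ℝ × ℝ | (a : ℝ) * p.1 ^ 2 + (b : ℝ) * p.2 ^ 2 = 1} ⊆
      closure ({p : ℝ × ℝ | (a : ℝ) * p.1 ^ 2 + (b : ℝ) * p.2 ^ 2 = 1} ∩
        {p : ℝ × ℝ | (∃ qx : ℚ, p.1 = qx) ∧ ∃ qy : ℚ, p.2 = qy}) := by
  intro p hp
  have ha' : (0:ℝ) < (a:ℝ) := by exact_mod_cast ha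
  have hb' : (0:ℝ) < (b:ℝ) := by exact_mod_cast hb
  have hsa : (0:ℝ) < Real.sqrt a := Real.sqrt_pos.2 ha'
  have hsb : (0:ℝ) < Real.sqrt b := Real.sqrt_pos.2 hb'
  have haa : Real.sqrt a * Real.sqrt a = (a:ℝ) := Real.mul_self_sqrt ha'.le
  have hbb : Real.sqrt b * Real.sqrt b = (b:ℝ) := Real.mul_self_sqrt hb'.le
  have hc0 : Real.cos θ₀ = (x₀ : ℝ) * Real.sqrt a := by
    rw [hx₀]; field_simp
  have hs0 : Real.sin θ₀ = (y₀ : ℝ) * Real.sqrt b := by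
    rw [hy₀]; field_simp
  -- the parametrization
  set φ : ℝ → ℝ × ℝ := fun θ => (Real.cos θ / Real.sqrt a, Real.sin θ / Real.sqrt b) with hφ
  have hφcont : Continuous φ := by
    apply Continuous.prodMk
    · exact (Real.continuous_cos).div_const _
    · exact (Real.continuous_sin).div_const _
  -- rotation step by 2θ₀ preserves "good" angles
  have step_add : ∀ θ : ℝ,
      (∃ qx qy : ℚ, Real.cos θ = (qx:ℝ) * Real.sqrt a ∧ Real.sin θ = (qy:ℝ) * Real.sqrt b) →
      (∃ qx qy : ℚ, Real.cos (θ + 2*θ₀) = (qx:ℝ) * Real.sqrt a ∧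
        Real.sin (θ + 2*θ₀) = (qy:ℝ) * Real.sqrt b) := by
    rintro θ ⟨qx, qy, hqx, hqy⟩
    refine ⟨qx*(2*a*x₀^2-1) - 2*b*x₀*y₀*qy, qy*(2*a*x₀^2-1) + 2*a*x₀*y₀*qx, ?_, ?_⟩
    · rw [Real.cos_add, Real.cos_two_mul, Real.sin_two_mul, hc0, hs0, hqx, hqy]
      push_cast
      linear_combination (2*(x₀:ℝ)^2*(qx:ℝ)*Real.sqrt a) * haa -
        (2*(x₀:ℝ)*(y₀:ℝ)*(qy:ℝ)*Real.sqrt a) * hbb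
    · rw [Real.sin_add, Real.cos_two_mul, Real.sin_two_mul, hc0, hs0, hqx, hqy]
      push_cast
      linear_combination (2*(x₀:ℝ)^2*(qy:ℝ)*Real.sqrt b) * haa +
        (2*(x₀:ℝ)*(y₀:ℝ)*(qx:ℝ)*Real.sqrt b) * haa * 0 +
        (2*(x₀:ℝ)*(y₀:ℝ)*(qx:ℝ)*Real.sqrt b) * haa
  have step_sub : ∀ θ : ℝ,
      (∃ qx qy : ℚ, Real.cos θ = (qx:ℝ) * Real.sqrt a ∧ Real.sin θ = (qy:ℝ) * Real.sqrt b) →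
      (∃ qx qy : ℚ, Real.cos (θ - 2*θ₀) = (qx:ℝ) * Real.sqrt a ∧
        Real.sin (θ - 2*θ₀) = (qy:ℝ) * Real.sqrt b) := by
    rintro θ ⟨qx, qy, hqx, hqy⟩
    refine ⟨qx*(2*a*x₀^2-1) + 2*b*x₀*y₀*qy, qy*(2*a*x₀^2-1) - 2*a*x₀*y₀*qx, ?_, ?_⟩
    · rw [Real.cos_sub, Real.cos_two_mul, Real.sin_two_mul, hc0, hs0, hqx, hqy]
      push_cast
      linear_combination (2*(x₀:ℝ)^2*(qx:ℝ)*Real.sqrt a) * haa +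
        (2*(x₀:ℝ)*(y₀:ℝ)*(qy:ℝ)*Real.sqrt a) * hbb
    · rw [Real.sin_sub, Real.cos_two_mul, Real.sin_two_mul, hc0, hs0, hqx, hqy]
      push_cast
      linear_combination (2*(x₀:ℝ)^2*(qy:ℝ)*Real.sqrt b) * haa -
        (2*(x₀:ℝ)*(y₀:ℝ)*(qx:ℝ)*Real.sqrt b) * haa
  have main : ∀ n : ℤ, ∃ qx qy : ℚ,
      Real.cos (θ₀ + 2*θ₀*n) = (qx:ℝ) * Real.sqrt a ∧
      Real.sin (θ₀ + 2*θ₀*n) = (qy:ℝ) * Real.sqrt b := by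
    intro n
    induction n using Int.induction_on with
    | zero => exact ⟨x₀, y₀, by push_cast; simpa using hc0, by push_cast; simpa using hs0⟩
    | succ k ih =>
      have := step_add _ ih
      have harg : θ₀ + 2*θ₀*((k:ℤ)+1 : ℤ) = (θ₀ + 2*θ₀*(k:ℤ)) + 2*θ₀ := by push_cast; ring
      rwa [harg]
    | pred k ih =>
      have := step_sub _ ih
      have harg : θ₀ + 2*θ₀*(-(k:ℤ)-1 : ℤ) = (θ₀ + 2*θ₀*(-(k:ℤ) : ℤ)) - 2*θ₀ := by
        push_cast; ring
      rwa [harg]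
  -- the dense set of angles
  set G : AddSubgroup ℝ := AddSubgroup.zmultiples (2*θ₀) ⊔ AddSubgroup.zmultiples (2*π) with hG
  have hGdense : Dense (G : Set ℝ) := by
    rcases G.dense_or_cyclic with h | ⟨g, hg⟩
    · exact h
    · exfalso
      have h1 : (2*θ₀) ∈ G := AddSubgroup.mem_sup_left (AddSubgroup.mem_zmultiples _)
      have h2 : (2*π) ∈ G := AddSubgroup.mem_sup_right (AddSubgroup.mem_zmultiples _)
      rw [hg, AddSubgroup.mem_closure_singleton] at h1 h2
      obtain ⟨n, hn⟩ := h1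
      obtain ⟨m, hm⟩ := h2
      have hm0 : (m:ℝ) ≠ 0 := by
        rintro h
        have : m = 0 := by exact_mod_cast h
        subst this
        simp at hm
      apply hθ₀
      refine ⟨(n : ℚ)/(2*m), ?_⟩
      have hn' : (n:ℝ) * g = 2*θ₀ := by rw [← hn]; simp [zsmul_eq_mul]
      have hm' : (m:ℝ) * g = 2*π := by rw [← hm]; simp [zsmul_eq_mul]
      have key : (m:ℝ) * (2*θ₀) = (n:ℝ) * (2*π) := by
        calc (m:ℝ) * (2*θ₀) = (m:ℝ) * ((n:ℝ)*g) := by rw [hn']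
        _ = (n:ℝ) * ((m:ℝ)*g) := by ring
        _ = (n:ℝ) * (2*π) := by rw [hm']
      push_cast
      field_simp
      nlinarith [key]
  set D : Set ℝ := (fun x => θ₀ + x) '' (G : Set ℝ) with hD
  have hDdense : Dense D := by
    have hsurj : Function.Surjective (fun x : ℝ => θ₀ + x) := fun y => ⟨y - θ₀, by ring⟩
    exact hsurj.denseRange.dense_image (continuous_const.add continuous_id) hGdense
  -- the image of D lands in rational points of the ellipse
  have himg : φ '' D ⊆ {p : ℝ × ℝ | (a : ℝ) * p.1 ^ 2 + (b : ℝ) * p.2 ^ 2 = 1} ∩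
      {p : ℝ × ℝ | (∃ qx : ℚ, p.1 = qx) ∧ ∃ qy : ℚ, p.2 = qy} := by
    rintro _ ⟨d, ⟨s, hs, rfl⟩, rfl⟩
    show φ (θ₀ + s) ∈ _
    have hs' : s ∈ G := hs
    rw [hG, AddSubgroup.mem_sup] at hs'
    obtain ⟨u, hu, v, hv, huv⟩ := hs'
    obtain ⟨n, rfl⟩ := AddSubgroup.mem_zmultiples_iff.mp hu
    obtain ⟨m, rfl⟩ := AddSubgroup.mem_zmultiples_iff.mp hv
    obtain ⟨qx, qy, hqx, hqy⟩ := main n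
    have harg : θ₀ + (n • (2*θ₀) + m • (2*π)) = (θ₀ + 2*θ₀*n) + m * (2*π) := by
      simp [zsmul_eq_mul]; ring
    rw [← huv, harg]
    have hcos : Real.cos ((θ₀ + 2*θ₀*n) + m * (2*π)) = (qx:ℝ) * Real.sqrt a := by
      rw [Real.cos_add_int_mul_two_pi, hqx]
    have hsin : Real.sin ((θ₀ + 2*θ₀*n) + m * (2*π)) = (qy:ℝ) * Real.sqrt b := by
      rw [Real.sin_add_int_mul_two_pi, hqy]
    constructor
    · show (a:ℝ) * (Real.cos _ / Real.sqrt a)^2 + (b:ℝ) * (Real.sin _ / Real.sqrt b)^2 = 1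
      rw [div_pow, div_pow, Real.sq_sqrt ha'.le, Real.sq_sqrt hb'.le,
        ← mul_div_assoc, mul_div_cancel_left₀ _ ha'.ne', ← mul_div_assoc,
        mul_div_cancel_left₀ _ hb'.ne']
      exact Real.cos_sq_add_sin_sq _
    · constructor
      · exact ⟨qx, by show Real.cos _ / Real.sqrt a = _; rw [hcos]; field_simp⟩
      · exact ⟨qy, by show Real.sin _ / Real.sqrt b = _; rw [hsin]; field_simp⟩
  -- find the angle of p
  set z : ℂ := ⟨Real.sqrt a * p.1, Real.sqrt b * p.2⟩ with hz
  have hp' : (a:ℝ) * p.1 ^ 2 + (b:ℝ) * p.2 ^ 2 = 1 := hp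
  have habs : ‖z‖ = 1 := by
    have hns : Complex.normSq z = 1 := by
      simp only [Complex.normSq_apply, hz]
      linear_combination hp' + p.1^2 * haa + p.2^2 * hbb
    rw [Complex.norm_def, hns, Real.sqrt_one]
  have hzne : z ≠ 0 := by
    intro h
    rw [h] at habs
    simp at habs
  have hcosθ : Real.cos z.arg = Real.sqrt a * p.1 := by
    rw [Complex.cos_arg hzne, habs]; simp [hz]
  have hsinθ : Real.sin z.arg = Real.sqrt b * p.2 := by
    rw [Complex.sin_arg, habs]; simp [hz]
  have hpφ : p = φ z.arg := by
    rw [hφ]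
    ext
    · show p.1 = Real.cos z.arg / Real.sqrt a
      rw [hcosθ]; field_simp
    · show p.2 = Real.sin z.arg / Real.sqrt b
      rw [hsinθ]; field_simp
  rw [hpφ]
  have h1 : φ z.arg ∈ φ '' (closure D) := ⟨z.arg, hDdense z.arg, rfl⟩
  have h2 : φ '' (closure D) ⊆ closure (φ '' D) := image_closure_subset_closure_image hφcont
  exact closure_mono himg (h2 h1)
end
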